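/- Let X be a normal d-pseudomanifold, d ≥ 1. Then X is strongly connected; in particular, X is a d-pseudomanifold. -/

import Mathlib

/-! Basic framework for finite simplicial complexes, pseudomanifolds and
bistellar moves, following Datta–Nilakantan. A complex is recorded as the
finite set of its faces (nonempty finite subsets of the vertex type). -/

namespace NPM

variable {α β : Type*} [DecidableEq α] [DecidableEq β]

/-- A "complex" datum: a finite family of finite subsets of `α`. -/
abbrev Complex (α : Type*) := Finset (Finset α)

/-- `K` is a simplicial complex: a nonempty collection of nonempty sets,
closed under passing to nonempty subsets. -/
def IsComplex (K : Complex α) : Prop :=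
  K.Nonempty ∧ (∀ σ ∈ K, σ.Nonempty) ∧ ∀ σ ∈ K, ∀ τ ⊆ σ, τ.Nonempty → τ ∈ K

/-- The vertex set of `K`. -/
def verts (K : Complex α) : Finset α := K.sup id

/-- `K` is pure of dimension `d`: every face is contained in a face with
`d+1` vertices. -/
def IsPure (K : Complex α) (d : ℕ) : Prop :=
  ∀ σ ∈ K, ∃ τ ∈ K, σ ⊆ τ ∧ τ.card = d + 1

/-- The facets ("`d`-faces") of a pure `d`-dimensional complex. -/
def facets (K : Complex α) (d : ℕ) : Complex α := K.filter (fun σ => σ.card = d + 1)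

/-- The link of a face `σ` in `K`. -/
def link (K : Complex α) (σ : Finset α) : Complex α :=
  K.filter (fun τ => Disjoint τ σ ∧ σ ∪ τ ∈ K)

/-- The degree of a face: the number of vertices of its link. -/
def degree (K : Complex α) (σ : Finset α) : ℕ := (verts (link K σ)).card

/-- A weak `d`-pseudomanifold: a pure `d`-dimensional complex in which every
`(d-1)`-face (i.e. face with `d` vertices) lies in exactly two facets. -/
def WeakPM (K : Complex α) (d : ℕ) : Prop :=
  IsComplex K ∧ IsPure K d ∧
    ∀ σ ∈ K, σ.card = d → (K.filter fun τ => σ ⊆ τ ∧ τ.card = d + 1).card = 2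

/-- Strong connectedness: any two facets are joined by a chain of facets in
which consecutive facets meet in a `(d-1)`-face. -/
def SConn (K : Complex α) (d : ℕ) : Prop :=
  ∀ σ ∈ facets K d, ∀ τ ∈ facets K d,
    Relation.ReflTransGen
      (fun a b => a ∈ facets K d ∧ b ∈ facets K d ∧ (a ∩ b).card = d) σ τ

/-- A `d`-pseudomanifold: a strongly connected weak `d`-pseudomanifold. -/
def IsPM (K : Complex α) (d : ℕ) : Prop := WeakPM K d ∧ SConn K d

/-- Connectedness of a complex: the graph of vertices and edges is connected. -/
def Conn (K : Complex α) : Prop :=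
  (verts K).Nonempty ∧ ∀ u ∈ verts K, ∀ v ∈ verts K,
    Relation.ReflTransGen (fun a b => a ≠ b ∧ ({a, b} : Finset α) ∈ K) u v

/-- A normal `d`-pseudomanifold: a connected weak `d`-pseudomanifold in which
the link of every face of dimension `≤ d - 2` is connected. -/
def NormalPM (K : Complex α) (d : ℕ) : Prop :=
  WeakPM K d ∧ Conn K ∧ ∀ σ ∈ K, σ.card + 1 ≤ d → Conn (link K σ)

/-- `K` is neighbourly: every pair of vertices forms an edge. -/
def Neighbourly (K : Complex α) : Prop :=
  ∀ u ∈ verts K, ∀ v ∈ verts K, u ≠ v → ({u, v} : Finset α) ∈ K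

/-- Isomorphism of complexes: a map injective on the vertex set carrying the
faces of `K` exactly onto the faces of `L`. -/
def Iso (K : Complex α) (L : Complex β) : Prop :=
  ∃ f : α → β, Set.InjOn f ↑(verts K) ∧ L = K.image (fun σ => σ.image f)

/-- The complex generated by a family of facets: all nonempty subsets. -/
def genCx (F : Finset (Finset α)) : Complex α :=
  F.biUnion fun σ => σ.powerset.filter (fun τ => τ.Nonempty)

/-- The standard sphere on the vertex set `B`: all nonempty proper subsets
of `B`. -/
def stdSphere (B : Finset α) : Complex α :=
  B.powerset.filter fun τ => τ.Nonempty ∧ τ ≠ B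

/-- In a weak `d`-pseudomanifold, a removable `(d-i)`-face `A`: its link is a
standard sphere `S^{i-1}_{i+1}(B)` with `B` not a face.  (For `d = 3`,
`i = 1` gives removable 2-faces and `i = 2` gives removable 1-faces.) -/
def RemovableFace (d i : ℕ) (K : Complex α) (A : Finset α) : Prop :=
  A ∈ K ∧ A.card = d - i + 1 ∧
    ∃ B : Finset α, B.card = i + 1 ∧ B ∉ K ∧ link K A = stdSphere B

/-- The bistellar `i`-move (`0 < i ≤ d`) relation on weak `d`-pseudomanifolds:
`L` is obtained from `K` by removing a removable `(d-i)`-face `A` with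
`link K A = stdSphere B` and inserting the facets `(B ∪ A) \ {v}`, `v ∈ A`. -/
def BMove (d i : ℕ) (K L : Complex α) : Prop :=
  ∃ A B : Finset α, A ∈ K ∧ A.card = d - i + 1 ∧ B.card = i + 1 ∧ B ∉ K ∧
    link K A = stdSphere B ∧
    L = genCx ((facets K d).filter (fun σ => ¬ A ⊆ σ) ∪
          A.image fun v => (B ∪ A).erase v)

/-- The bistellar `0`-move: star a new vertex `w` in a facet `σ`. -/
def BMove0 (d : ℕ) (K L : Complex α) : Prop :=
  ∃ σ w, σ ∈ K ∧ σ.card = d + 1 ∧ w ∉ verts K ∧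
    L = genCx (((facets K d).erase σ) ∪ σ.image fun v => insert w (σ.erase v))

/-- A single bistellar move of any type `0 ≤ i ≤ d`. -/
def BStep (d : ℕ) (K L : Complex α) : Prop :=
  BMove0 d K L ∨ ∃ i, 0 < i ∧ i ≤ d ∧ BMove d i K L

/-- Bistellar equivalence: a finite sequence of bistellar moves. -/
def BEquiv (d : ℕ) : Complex α → Complex α → Prop :=
  Relation.ReflTransGen (BStep d)

/-- A proper bistellar move: a bistellar `i`-move with `0 < i < d`. -/
def PMove (d : ℕ) (K L : Complex α) : Prop := ∃ i, 0 < i ∧ i < d ∧ BMove d i K L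

/-- Proper bistellar equivalence. -/
def PEquiv (d : ℕ) : Complex α → Complex α → Prop :=
  Relation.ReflTransGen (PMove d)

/-- The result of the bistellar move on the face `A` of the weak
`d`-pseudomanifold `K` (deterministic form: `B` is the vertex set of
`link K A`). -/
def kappa (d : ℕ) (K : Complex α) (A : Finset α) : Complex α :=
  genCx ((facets K d).filter (fun σ => ¬ A ⊆ σ) ∪
    A.image fun v => (verts (link K A) ∪ A).erase v)

/-- A cycle: a (finite) 1-pseudomanifold. -/
def Cycle (K : Complex α) : Prop := IsPM K 1

/-- A combinatorial 2-manifold: a weak 2-pseudomanifold all whose vertex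
links are cycles. -/
def Comb2Mfd (K : Complex α) : Prop :=
  WeakPM K 2 ∧ ∀ v, ({v} : Finset α) ∈ K → Cycle (link K {v})

/-- The Euler characteristic `f₀ - f₁ + f₂` of a 2-dimensional complex. -/
def eulerChar (K : Complex α) : ℤ :=
  ((K.filter fun σ => σ.card = 1).card : ℤ) -
    ((K.filter fun σ => σ.card = 2).card : ℤ) +
    ((K.filter fun σ => σ.card = 3).card : ℤ)

/-- A combinatorial 2-sphere: a connected combinatorial 2-manifold with
Euler characteristic 2. -/
def Comb2Sphere (K : Complex α) : Prop := Comb2Mfd K ∧ Conn K ∧ eulerChar K = 2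

/-- A combinatorial 3-manifold: a 3-pseudomanifold all whose vertex links are
combinatorial 2-spheres. -/
def Comb3Mfd (K : Complex α) : Prop :=
  IsPM K 3 ∧ ∀ v, ({v} : Finset α) ∈ K → Comb2Sphere (link K {v})

end NPM

namespace NPM

set_option linter.unusedSectionVars false

variable {α : Type*} [DecidableEq α]

lemma mem_link {K : Complex α} {σ τ : Finset α} :
    τ ∈ link K σ ↔ τ ∈ K ∧ Disjoint τ σ ∧ σ ∪ τ ∈ K := by
  simp [link, and_assoc]

lemma mem_facets' {K : Complex α} {d : ℕ} {σ : Finset α} :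
    σ ∈ facets K d ↔ σ ∈ K ∧ σ.card = d + 1 := by
  simp [facets]

lemma mem_verts' {K : Complex α} {v : α} : v ∈ verts K ↔ ∃ σ ∈ K, v ∈ σ := by
  simp [verts, Finset.mem_sup]

lemma singleton_mem {K : Complex α} (hK : IsComplex K) {v : α} (hv : v ∈ verts K) :
    ({v} : Finset α) ∈ K := by
  obtain ⟨σ, hσ, hvσ⟩ := mem_verts'.mp hv
  exact hK.2.2 σ hσ {v} (Finset.singleton_subset_iff.mpr hvσ) ⟨v, by simp⟩

lemma not_mem_of_mem_link {K : Complex α} {v : α} {τ : Finset α}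
    (h : τ ∈ link K {v}) : v ∉ τ := by
  have := (mem_link.mp h).2.1
  simpa [Finset.disjoint_singleton_right] using this

lemma insert_mem_of_mem_link {K : Complex α} {v : α} {τ : Finset α}
    (h : τ ∈ link K {v}) : insert v τ ∈ K := by
  have := (mem_link.mp h).2.2
  rwa [← Finset.insert_eq] at this

lemma erase_mem_link {K : Complex α} (hK : IsComplex K) {v : α} {F : Finset α}
    (hF : F ∈ K) (hvF : v ∈ F) (hc : 2 ≤ F.card) : F.erase v ∈ link K {v} := by
  refine mem_link.mpr ⟨?_, ?_, ?_⟩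
  · refine hK.2.2 F hF _ (Finset.erase_subset _ _) ?_
    rw [← Finset.card_pos, Finset.card_erase_of_mem hvF]; omega
  · simp [Finset.disjoint_singleton_right]
  · rw [← Finset.insert_eq]; rwa [Finset.insert_erase hvF]

lemma facet_erase {K : Complex α} {d : ℕ} (hK : IsComplex K) (hd : 1 ≤ d)
    {v : α} {F : Finset α} (hF : F ∈ facets K d) (hv : v ∈ F) :
    F.erase v ∈ facets (link K {v}) (d - 1) := by
  obtain ⟨hFK, hc⟩ := mem_facets'.mp hF
  refine mem_facets'.mpr ⟨erase_mem_link hK hFK hv (by omega), ?_⟩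
  rw [Finset.card_erase_of_mem hv, hc]; omega

lemma facet_insert {K : Complex α} {d : ℕ} (hd : 1 ≤ d) {v : α} {a : Finset α}
    (ha : a ∈ facets (link K {v}) (d - 1)) : insert v a ∈ facets K d := by
  obtain ⟨haL, hc⟩ := mem_facets'.mp ha
  refine mem_facets'.mpr ⟨insert_mem_of_mem_link haL, ?_⟩
  rw [Finset.card_insert_of_notMem (not_mem_of_mem_link haL), hc]; omega

lemma link_pure {K : Complex α} {d : ℕ} (hK : IsComplex K) (hpure : IsPure K d)
    (hd : 1 ≤ d) {v : α} : IsPure (link K {v}) (d - 1) := by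
  intro τ hτ
  obtain ⟨hτK, hdisj, hins⟩ := mem_link.mp hτ
  obtain ⟨F, hF, hsub, hcard⟩ := hpure _ hins
  have hvF : v ∈ F := hsub (by simp)
  refine ⟨F.erase v, erase_mem_link hK hF hvF (by omega), ?_, ?_⟩
  · intro x hx
    refine Finset.mem_erase.mpr ⟨?_, hsub (Finset.mem_union_right _ hx)⟩
    rintro rfl
    exact (Finset.disjoint_singleton_right.mp hdisj) hx
  · rw [Finset.card_erase_of_mem hvF, hcard]; omega

lemma link_count {K : Complex α} {d : ℕ} (hW : WeakPM K d) (hd : 1 ≤ d)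
    {v : α} {σ : Finset α} (hσ : σ ∈ link K {v}) (hcard : σ.card = d - 1) :
    ((link K {v}).filter fun τ => σ ⊆ τ ∧ τ.card = d - 1 + 1).card = 2 := by
  have hK : IsComplex K := hW.1
  have hvσ : v ∉ σ := not_mem_of_mem_link hσ
  have h1 : insert v σ ∈ K := insert_mem_of_mem_link hσ
  have h2 := hW.2.2 (insert v σ) h1 (by rw [Finset.card_insert_of_notMem hvσ]; omega)
  rw [← h2]
  apply Finset.card_bij (fun τ _ => insert v τ)
  · intro τ hτ
    simp only [Finset.mem_filter] at hτ ⊢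
    obtain ⟨hτL, hστ, hτc⟩ := hτ
    refine ⟨insert_mem_of_mem_link hτL, Finset.insert_subset_insert _ hστ, ?_⟩
    rw [Finset.card_insert_of_notMem (not_mem_of_mem_link hτL), hτc]; omega
  · intro a ha b hb hab
    simp only [Finset.mem_filter] at ha hb
    have hva := not_mem_of_mem_link ha.1
    have hvb := not_mem_of_mem_link hb.1
    have h3 : (insert v a).erase v = (insert v b).erase v := by rw [hab]
    rwa [Finset.erase_insert hva, Finset.erase_insert hvb] at h3
  · intro F hF
    simp only [Finset.mem_filter] at hF
    obtain ⟨hFK, hsub, hFc⟩ := hF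
    have hvF : v ∈ F := hsub (Finset.mem_insert_self _ _)
    refine ⟨F.erase v, ?_, ?_⟩
    · simp only [Finset.mem_filter]
      refine ⟨erase_mem_link hK hFK hvF (by omega), ?_, ?_⟩
      · intro x hx
        exact Finset.mem_erase.mpr ⟨fun h => hvσ (h ▸ hx),
          hsub (Finset.mem_insert_of_mem hx)⟩
      · rw [Finset.card_erase_of_mem hvF, hFc]; omega
    · rw [Finset.insert_erase hvF]

lemma link_link {K : Complex α} (hK : IsComplex K) {v : α} {σ : Finset α}
    (hσ : σ ∈ link K {v}) :
    link (link K {v}) σ = link K (insert v σ) := by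
  have hvσ : v ∉ σ := not_mem_of_mem_link hσ
  ext τ
  simp only [mem_link, Finset.disjoint_insert_right, Finset.disjoint_singleton_right,
    ← Finset.insert_eq, Finset.insert_union]
  constructor
  · rintro ⟨⟨hτK, hvτ, -⟩, hτσ, -, -, hbig⟩
    exact ⟨hτK, ⟨hvτ, hτσ⟩, hbig⟩
  · rintro ⟨hτK, ⟨hvτ, hτσ⟩, hbig⟩
    have hτne : τ.Nonempty := hK.2.1 τ hτK
    refine ⟨⟨hτK, hvτ, ?_⟩, hτσ, ?_, ?_, hbig⟩
    · exact hK.2.2 _ hbig (insert v τ)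
        (Finset.insert_subset_insert _ Finset.subset_union_right)
        (Finset.insert_nonempty _ _)
    · exact hK.2.2 _ hbig (σ ∪ τ) (Finset.subset_insert _ _)
        (hτne.mono Finset.subset_union_right)
    · simp [Finset.mem_union, hvσ, hvτ]

lemma link_complex {K : Complex α} {d : ℕ} (hK : IsComplex K) (hpure : IsPure K d)
    (hd : 1 ≤ d) {v : α} (hv : ({v} : Finset α) ∈ K) : IsComplex (link K {v}) := by
  refine ⟨?_, ?_, ?_⟩
  · obtain ⟨F, hF, hsub, hcard⟩ := hpure _ hv
    have hvF : v ∈ F := hsub (by simp)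
    exact ⟨F.erase v, erase_mem_link hK hF hvF (by omega)⟩
  · intro τ hτ
    exact hK.2.1 τ (mem_link.mp hτ).1
  · intro τ hτ τ' hsub hne
    obtain ⟨hτK, hdisj, hins⟩ := mem_link.mp hτ
    refine mem_link.mpr ⟨hK.2.2 τ hτK τ' hsub hne, hdisj.mono_left hsub, ?_⟩
    exact hK.2.2 _ hins _ (Finset.union_subset_union_right hsub)
      (hne.mono Finset.subset_union_right)

lemma link_normal {K : Complex α} {d : ℕ} (hd : 2 ≤ d) (hK : NormalPM K d)
    {v : α} (hv : ({v} : Finset α) ∈ K) : NormalPM (link K {v}) (d - 1) := by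
  obtain ⟨⟨hC, hpure, hcount⟩, hconn, hlinks⟩ := hK
  refine ⟨⟨link_complex hC hpure (by omega) hv, link_pure hC hpure (by omega), ?_⟩, ?_, ?_⟩
  · intro σ hσ hcard
    exact link_count ⟨hC, hpure, hcount⟩ (by omega) hσ hcard
  · exact hlinks {v} hv (by simp; omega)
  · intro σ hσ hcard
    rw [link_link hC hσ]
    refine hlinks (insert v σ) (insert_mem_of_mem_link hσ) ?_
    rw [Finset.card_insert_of_notMem (not_mem_of_mem_link hσ)]
    omega

lemma sconn_zero (K : Complex α) : SConn K 0 := by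
  intro σ hσ τ hτ
  rcases eq_or_ne σ τ with rfl | hne
  · exact Relation.ReflTransGen.refl
  · refine Relation.ReflTransGen.single ⟨hσ, hτ, ?_⟩
    obtain ⟨a, rfl⟩ := Finset.card_eq_one.mp (mem_facets'.mp hσ).2
    obtain ⟨b, rfl⟩ := Finset.card_eq_one.mp (mem_facets'.mp hτ).2
    have hab : a ≠ b := fun h => hne (by rw [h])
    simp [Finset.singleton_inter_of_notMem, hab]

lemma key_step {K : Complex α} {d : ℕ} (hd : 1 ≤ d) (hK : NormalPM K d)
    (IH : ∀ v ∈ verts K, SConn (link K {v}) (d - 1)) : SConn K d := by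
  obtain ⟨⟨hC, hpure, hcount⟩, ⟨hvne, hconn⟩, hlinks⟩ := hK
  set R : Finset α → Finset α → Prop :=
    fun a b => a ∈ facets K d ∧ b ∈ facets K d ∧ (a ∩ b).card = d with hR
  have hA : ∀ v : α, ∀ F ∈ facets K d, ∀ G ∈ facets K d, v ∈ F → v ∈ G →
      Relation.ReflTransGen R F G := by
    intro v F hF G hG hvF hvG
    have hvv : v ∈ verts K := mem_verts'.mpr ⟨F, (mem_facets'.mp hF).1, hvF⟩
    have h := IH v hvv (F.erase v) (facet_erase hC hd hF hvF)
      (G.erase v) (facet_erase hC hd hG hvG)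
    have hstep : ∀ a b : Finset α,
        (a ∈ facets (link K {v}) (d - 1) ∧ b ∈ facets (link K {v}) (d - 1) ∧
          (a ∩ b).card = d - 1) → R (insert v a) (insert v b) := by
      rintro a b ⟨ha, hb, hcard⟩
      have hva : v ∉ a := not_mem_of_mem_link (mem_facets'.mp ha).1
      have hvb : v ∉ b := not_mem_of_mem_link (mem_facets'.mp hb).1
      refine ⟨facet_insert hd ha, facet_insert hd hb, ?_⟩
      have hint : insert v a ∩ insert v b = insert v (a ∩ b) := by
        ext x; simp only [Finset.mem_inter, Finset.mem_insert]; tauto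
      rw [hint, Finset.card_insert_of_notMem
        (fun hmem => hva (Finset.mem_inter.mp hmem).1), hcard]
      omega
    have hlift : Relation.ReflTransGen R (insert v (F.erase v)) (insert v (G.erase v)) :=
      Relation.ReflTransGen.lift (insert v) hstep _ _ h
    rwa [Finset.insert_erase hvF, Finset.insert_erase hvG] at hlift
  have main : ∀ a b : α,
      Relation.ReflTransGen (fun a b => a ≠ b ∧ ({a, b} : Finset α) ∈ K) a b →
      ∀ F ∈ facets K d, ∀ G ∈ facets K d, a ∈ F → b ∈ G →
        Relation.ReflTransGen R F G := by
    intro a b hab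
    induction hab with
    | refl => intro F hF G hG haF haG; exact hA a F hF G hG haF haG
    | @tail b c hub hbc ih =>
      intro F hF G hG haF hcG
      obtain ⟨hne, hedge⟩ := hbc
      obtain ⟨H, hH, hsub, hcard⟩ := hpure _ hedge
      have hHf : H ∈ facets K d := mem_facets'.mpr ⟨hH, hcard⟩
      exact (ih F hF H hHf haF (hsub (by simp))).trans
        (hA c H hHf G hG (hsub (by simp)) hcG)
  intro σ hσ τ hτ
  obtain ⟨hσK, hσcard⟩ := mem_facets'.mp hσ
  obtain ⟨hτK, hτcard⟩ := mem_facets'.mp hτ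
  obtain ⟨u, hu⟩ := hC.2.1 σ hσK
  obtain ⟨w, hw⟩ := hC.2.1 τ hτK
  have huv : u ∈ verts K := mem_verts'.mpr ⟨σ, hσK, hu⟩
  have hwv : w ∈ verts K := mem_verts'.mpr ⟨τ, hτK, hw⟩
  exact main u w (hconn u huv w hwv) σ hσ τ hτ hu hw

lemma sconn_of_normal : ∀ d : ℕ, ∀ X : Complex α, 1 ≤ d → NormalPM X d → SConn X d := by
  intro d
  induction d with
  | zero => intro X h; omega
  | succ n ih =>
    intro X _ hX
    refine key_step (by omega) hX ?_
    intro v hv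
    rcases Nat.eq_zero_or_pos n with rfl | hn
    · exact sconn_zero _
    · have hnorm := link_normal (K := X) (by omega) hX (singleton_mem hX.1.1 hv)
      have h2 := ih (link X {v}) hn (by simpa using hnorm)
      simpa using h2

end NPM

/-- a normal `d`-pseudomanifold (`d ≥ 1`) is strongly connected,
hence a `d`-pseudomanifold. -/
theorem statement19 {α : Type u} [DecidableEq α] (X : NPM.Complex α) (d : ℕ)
    (hd : 1 ≤ d) (hX : NPM.NormalPM X d) :
    NPM.SConn X d ∧ NPM.IsPM X d := by
  have h := NPM.sconn_of_normal d X hd hX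
  exact ⟨h, hX.1, h⟩
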